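/- arXiv:2307.07203 — 3 statements merged into one kernel-verified Lean document; each statement's English description precedes it below -/
import Mathlib

section
/- (Rippa's leave-one-out cross-validation identity.) Let $\mathcal{M}$ be an invertible real $N \times N$ matrix, $\mathbf{y} \in \mathbb{R}^N$, and $\mathbf{c} = \mathcal{M}^{-1} \mathbf{y}$. Fix $k \in \{1, \dots, N\}$ and suppose that the $(N-1) \times (N-1)$ submatrix $\mathcal{M}^{[k]}$ obtained from $\mathcal{M}$ by deleting its $k$-th row and $k$-th column is also invertible. Let $\mathbf{c}^{[k]} = (\mathcal{M}^{[k]})^{-1} \mathbf{y}^{[k]}$, where $\mathbf{y}^{[k]} \in \mathbb{R}^{N-1}$ is $\mathbf{y}$ with its $k$-th entry deleted. Then $(\mathcal{M}^{-1})_{kk} \ne 0$ and the leave-one-out residual satisfies $y_k - \sum_{i \ne k} \mathcal{M}_{ki}\, c^{[k]}_i = \frac{c_k}{(\mathcal{M}^{-1})_{kk}}$. -/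
lemma sum_split_ne {N : ℕ} (k : Fin N) (f : Fin N → ℝ) :
    ∑ i, f i = f k + ∑ i : {i : Fin N // i ≠ k}, f i.val := by
  rw [← Finset.add_sum_erase _ f (Finset.mem_univ k)]
  congr 1
  rw [← Finset.sum_subtype (Finset.univ.erase k)
    (fun x => by simp [Finset.mem_erase]) f]

/-- Rippa's leave-one-out cross-validation identity: if `𝓜` and its `k`-th principal
submatrix `𝓜^[k]` (deleting row and column `k`) are invertible, `c = 𝓜⁻¹ y` and
`c^[k] = (𝓜^[k])⁻¹ y^[k]`, then `(𝓜⁻¹)_{kk} ≠ 0` and the leave-one-out residual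
satisfies `y_k - ∑_{i ≠ k} 𝓜_{ki} c^[k]_i = c_k / (𝓜⁻¹)_{kk}`. -/
theorem rippa_loocv_identity
    {N : ℕ} (M : Matrix (Fin N) (Fin N) ℝ) (hM : IsUnit M.det)
    (y : Fin N → ℝ) (c : Fin N → ℝ) (hc : c = M⁻¹.mulVec y)
    (k : Fin N)
    (Mk : Matrix {i : Fin N // i ≠ k} {i : Fin N // i ≠ k} ℝ)
    (hMk : Mk = M.submatrix Subtype.val Subtype.val)
    (hMkdet : IsUnit Mk.det)
    (ck : {i : Fin N // i ≠ k} → ℝ)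
    (hck : ck = Mk⁻¹.mulVec (fun i => y i.val)) :
    M⁻¹ k k ≠ 0 ∧
      y k - ∑ i : {i : Fin N // i ≠ k}, M k i.val * ck i = c k / M⁻¹ k k := by
  have hMA : M * M⁻¹ = 1 := Matrix.mul_nonsing_inv _ hM
  have hAM : M⁻¹ * M = 1 := Matrix.nonsing_inv_mul _ hM
  have hMkmul : Mk * Mk⁻¹ = 1 := Matrix.mul_nonsing_inv _ hMkdet
  have hMkinv : Mk⁻¹ * Mk = 1 := Matrix.nonsing_inv_mul _ hMkdet
  -- Part 1 : M⁻¹ k k ≠ 0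
  have hkk : M⁻¹ k k ≠ 0 := by
    intro h0
    -- restricted k-th column of M⁻¹
    set u : {i : Fin N // i ≠ k} → ℝ := fun i => M⁻¹ i.val k with hu
    have hMAapp : ∀ j : Fin N, ∑ i, M j i * M⁻¹ i k = (1 : Matrix (Fin N) (Fin N) ℝ) j k := by
      intro j
      rw [← Matrix.mul_apply, hMA]
    have hMku : Mk.mulVec u = 0 := by
      funext j
      have h := hMAapp j.val
      rw [sum_split_ne k (fun i => M j.val i * M⁻¹ i k), h0, mul_zero, zero_add] at h
      simp only [Matrix.mulVec, dotProduct, hMk, Matrix.submatrix_apply, Pi.zero_apply]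
      rw [h]
      simp [Matrix.one_apply, j.prop]
    have hu0 : u = 0 := by
      have := congrArg (Mk⁻¹.mulVec) hMku
      rwa [Matrix.mulVec_mulVec, hMkinv, Matrix.one_mulVec, Matrix.mulVec_zero] at this
    have h := hMAapp k
    rw [sum_split_ne k (fun i => M k i * M⁻¹ i k), h0, mul_zero, zero_add] at h
    have : ∑ i : {i : Fin N // i ≠ k}, M k i.val * M⁻¹ i.val k = 0 := by
      apply Finset.sum_eq_zero
      intro i _
      have : u i = 0 := by rw [hu0]; rfl
      rw [hu] at this
      simp only at this
      rw [this, mul_zero]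
    rw [this] at h
    simp [Matrix.one_apply] at h
  refine ⟨hkk, ?_⟩
  -- Part 2
  set e : ℝ := y k - ∑ i : {i : Fin N // i ≠ k}, M k i.val * ck i with he
  -- extend ck by zero at k
  set x : Fin N → ℝ := fun i => if h : i = k then 0 else ck ⟨i, h⟩ with hx
  have hMkck : Mk.mulVec ck = fun i => y i.val := by
    rw [hck, Matrix.mulVec_mulVec, hMkmul, Matrix.one_mulVec]
  have hMx : M.mulVec x = fun j => y j - (if j = k then e else 0) := by
    funext j
    simp only [Matrix.mulVec, dotProduct]
    rw [sum_split_ne k (fun i => M j i * x i)]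
    have hxk : x k = 0 := by simp [hx]
    have hsum : ∑ i : {i : Fin N // i ≠ k}, M j i.val * x i.val
        = ∑ i : {i : Fin N // i ≠ k}, M j i.val * ck i := by
      apply Finset.sum_congr rfl
      intro i _
      congr 1
      simp [hx, i.prop]
    rw [hxk, mul_zero, zero_add, hsum]
    by_cases hj : j = k
    · subst hj; simp [he]
    · simp only [hj, if_false, sub_zero]
      have := congrFun hMkck ⟨j, hj⟩
      simp only [Matrix.mulVec, dotProduct, hMk, Matrix.submatrix_apply] at this
      exact this
  -- apply M⁻¹
  have hxeq : x = fun i => c i - e * M⁻¹ i k := by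
    have h1 : M⁻¹.mulVec (M.mulVec x) = x := by
      rw [Matrix.mulVec_mulVec, hAM, Matrix.one_mulVec]
    rw [← h1, hMx]
    funext i
    simp only [Matrix.mulVec, dotProduct, hc, mul_sub]
    rw [Finset.sum_sub_distrib]
    congr 1
    rw [show (∑ j : Fin N, M⁻¹ i j * if j = k then e else 0)
        = ∑ j : Fin N, if j = k then M⁻¹ i j * e else 0 from
      Finset.sum_congr rfl (fun j _ => by by_cases hj : j = k <;> simp [hj])]
    rw [Finset.sum_ite_eq' Finset.univ k (fun j => M⁻¹ i j * e)]
    simp [mul_comm]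
  have hkx : x k = 0 := by simp [hx]
  rw [hxeq] at hkx
  have : c k = e * M⁻¹ k k := by linarith
  rw [this, mul_div_assoc, div_self hkk, mul_one]
end

section
/- (Polynomial reproduction of the Multinode Shepard method.) Let $s \ge 1$, $d \ge 0$, $m_d = \binom{s+d}{d}$, let $X = \{P_i\}_{i=1}^N \subset \mathbb{R}^s$ be pairwise distinct points, and let $\mathcal{S} = \{\sigma_j\}_{j=1}^S$ be a family of subsets $\sigma_j = \{P_{j_1}, \dots, P_{j_{m_d}}\} \subseteq X$, each of cardinality $m_d$ and unisolvent for polynomial interpolation of total degree $d$, with $\bigcup_{j=1}^S \sigma_j = X$. For $\mu > 0$ and $P \in \mathbb{R}^s \setminus X$, define the Multinode Shepard basis functions $W_{\mu,j}(P) = \frac{\prod_{l=1}^{m_d} \|P - P_{j_l}\|_2^{-\mu}}{\sum_{k=1}^S \prod_{l=1}^{m_d} \|P - P_{k_l}\|_2^{-\mu}}$ and the Multinode Shepard approximant $\Psi_\mu(P) = \sum_{j=1}^S W_{\mu,j}(P)\, \pi_j(P)$, where $\pi_j$ is the unique polynomial of total degree at most $d$ interpolating the data on $\sigma_j$. If the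 data come from a polynomial, i.e. $f_i = q(P_i)$ for all $i$ for some $s$-variate polynomial $q$ of total degree at most $d$, then $\Psi_\mu(P) = q(P)$ for every $P \in \mathbb{R}^s \setminus X$. -/
/-- Polynomial reproduction of the Multinode Shepard method: if the data are sampled
from a polynomial `q` of total degree at most `d`, then the Multinode Shepard blend
`Ψ_μ(P) = ∑_j W_{μ,j}(P) π_j(P)` of the local interpolating polynomials `π_j` on the
unisolvent subsets `σ_j` covering `X`, with normalized inverse-distance-product
weights `W_{μ,j}`, reproduces `q` at every `P ∉ X`. -/
theorem multinode_shepard_polynomial_reproduction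
    {s : ℕ} (hs : 1 ≤ s) (d N S : ℕ) (hN : 0 < N) (hS : 0 < S)
    (P : Fin N → EuclideanSpace ℝ (Fin s)) (hPinj : Function.Injective P)
    -- the unisolvent subsets `σ_j = {P_{j_1}, …, P_{j_{m_d}}}` of `X`:
    (idx : Fin S → Fin (Nat.choose (s + d) d) → Fin N)
    (hidxinj : ∀ j, Function.Injective (idx j))
    (hcover : ∀ i, ∃ j l, idx j l = i)
    (huni : ∀ j, ∀ g : Fin (Nat.choose (s + d) d) → ℝ,
      ∃! π : MvPolynomial (Fin s) ℝ, π.totalDegree ≤ d ∧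
        ∀ l, MvPolynomial.eval (P (idx j l)) π = g l)
    (μ : ℝ) (hμ : 0 < μ)
    -- the data come from a polynomial `q` of total degree at most `d`:
    (q : MvPolynomial (Fin s) ℝ) (hq : q.totalDegree ≤ d)
    -- the local interpolating polynomials `π_j` of the data on `σ_j`:
    (π : Fin S → MvPolynomial (Fin s) ℝ)
    (hπdeg : ∀ j, (π j).totalDegree ≤ d)
    (hπ : ∀ j l, MvPolynomial.eval (P (idx j l)) (π j) =
      MvPolynomial.eval (P (idx j l)) q)
    (Q : EuclideanSpace ℝ (Fin s)) (hQ : Q ∉ Set.range P) :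
    ∑ j, ((∏ l, ‖Q - P (idx j l)‖ ^ (-μ)) /
          ∑ k, ∏ l, ‖Q - P (idx k l)‖ ^ (-μ)) *
        MvPolynomial.eval (Q : Fin s → ℝ) (π j) =
      MvPolynomial.eval (Q : Fin s → ℝ) q := by
  have hπq : ∀ j, π j = q := by
    intro j
    obtain ⟨p, hp, hup⟩ := huni j (fun l => MvPolynomial.eval (P (idx j l)) q)
    have h1 := hup (π j) ⟨hπdeg j, hπ j⟩
    have h2 := hup q ⟨hq, fun l => rfl⟩
    rw [h1, h2]
  have hpos : ∀ k : Fin S, 0 < ∏ l, ‖Q - P (idx k l)‖ ^ (-μ) := by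
    intro k
    apply Finset.prod_pos
    intro l _
    apply Real.rpow_pos_of_pos
    rw [norm_pos_iff, sub_ne_zero]
    intro h
    exact hQ ⟨idx k l, h.symm⟩
  have hsum : 0 < ∑ k, ∏ l, ‖Q - P (idx k l)‖ ^ (-μ) := by
    apply Finset.sum_pos (fun k _ => hpos k)
    exact ⟨⟨0, hS⟩, Finset.mem_univ _⟩
  simp only [hπq]
  rw [← Finset.sum_mul, ← Finset.sum_div, div_self hsum.ne', one_mul]
end

section
/- (Interpolation property of the Multinode Shepard method.) Let $s \ge 1$, $d \ge 0$, $m_d = \binom{s+d}{d}$, let $X = \{P_i\}_{i=1}^N \subset \mathbb{R}^s$ be pairwise distinct points with data $f_1,\dots,f_N \in \mathbb{R}$, and let $\mathcal{S} = \{\sigma_j\}_{j=1}^S$ be a family of subsets $\sigma_j \subseteq X$, each of cardinality $m_d$ and unisolvent for polynomial interpolation of total degree $d$, with $\bigcup_{j=1}^S \sigma_j = X$. For $\mu > 0$ define, for $P \in \mathbb{R}^s \setminus X$, $W_{\mu,j}(P) = \frac{\prod_{l=1}^{m_d} \|P - P_{j_l}\|_2^{-\mu}}{\sum_{k=1}^S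 \prod_{l=1}^{m_d} \|P - P_{k_l}\|_2^{-\mu}}$ and $\Psi_\mu(P) = \sum_{j=1}^S W_{\mu,j}(P)\, \pi_j(P)$, where $\pi_j$ is the unique polynomial of total degree at most $d$ with $\pi_j(P_{j_l}) = f_{j_l}$ for $l = 1,\dots,m_d$. Then $\Psi_\mu$ extends continuously to each node: for every $i \in \{1,\dots,N\}$, $\lim_{P \to P_i,\ P \notin X} \Psi_\mu(P) = f_i$. -/
open Filter Topology

/-- Interpolation property of the Multinode Shepard method: the blend
`Ψ_μ(P) = ∑_j W_{μ,j}(P) π_j(P)` of the local interpolating polynomials `π_j` on the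
unisolvent subsets `σ_j` covering `X`, with normalized inverse-distance-product
weights `W_{μ,j}`, extends continuously to each node `P_i` with value `f_i`. -/
theorem multinode_shepard_interpolation_property
    {s : ℕ} (hs : 1 ≤ s) (d N S : ℕ) (hN : 0 < N) (hS : 0 < S)
    (P : Fin N → EuclideanSpace ℝ (Fin s)) (hPinj : Function.Injective P)
    (fdata : Fin N → ℝ)
    -- the unisolvent subsets `σ_j = {P_{j_1}, …, P_{j_{m_d}}}` of `X`:
    (idx : Fin S → Fin (Nat.choose (s + d) d) → Fin N)
    (hidxinj : ∀ j, Function.Injective (idx j))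
    (hcover : ∀ i, ∃ j l, idx j l = i)
    (huni : ∀ j, ∀ g : Fin (Nat.choose (s + d) d) → ℝ,
      ∃! π : MvPolynomial (Fin s) ℝ, π.totalDegree ≤ d ∧
        ∀ l, MvPolynomial.eval (P (idx j l)) π = g l)
    (μ : ℝ) (hμ : 0 < μ)
    -- the local interpolating polynomials `π_j` of the data on `σ_j`:
    (π : Fin S → MvPolynomial (Fin s) ℝ)
    (hπdeg : ∀ j, (π j).totalDegree ≤ d)
    (hπ : ∀ j l, MvPolynomial.eval (P (idx j l)) (π j) = fdata (idx j l)) :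
    ∀ i, Filter.Tendsto
      (fun Q : EuclideanSpace ℝ (Fin s) =>
        ∑ j, ((∏ l, ‖Q - P (idx j l)‖ ^ (-μ)) /
              ∑ k, ∏ l, ‖Q - P (idx k l)‖ ^ (-μ)) *
            MvPolynomial.eval (Q : Fin s → ℝ) (π j))
      (nhdsWithin (P i) (Set.range P)ᶜ) (nhds (fdata i)) := by
  classical
  intro i
  set F := nhdsWithin (P i) (Set.range P)ᶜ with hF
  set num : Fin S → EuclideanSpace ℝ (Fin s) → ℝ :=
    fun k Q => ∏ l, ‖Q - P (idx k l)‖ ^ (-μ) with hnumdef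
  set den : EuclideanSpace ℝ (Fin s) → ℝ := fun Q => ∑ k, num k Q with hdendef
  show Tendsto
    (fun Q : EuclideanSpace ℝ (Fin s) =>
      ∑ j, (num j Q / den Q) * MvPolynomial.eval (Q : Fin s → ℝ) (π j)) F (𝓝 (fdata i))
  have hmem : ∀ᶠ Q in F, Q ∈ (Set.range P)ᶜ := self_mem_nhdsWithin
  have hne : ∀ Q ∈ (Set.range P)ᶜ, ∀ n : Fin N, 0 < ‖Q - P n‖ := by
    intro Q hQ n
    rw [norm_sub_pos_iff]
    exact fun h => hQ ⟨n, h.symm⟩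
  have hnumpos : ∀ Q ∈ (Set.range P)ᶜ, ∀ k, 0 < num k Q := fun Q hQ k =>
    Finset.prod_pos fun l _ => Real.rpow_pos_of_pos (hne Q hQ _) _
  have : Nonempty (Fin S) := Fin.pos_iff_nonempty.mp hS
  have hdenpos : ∀ Q ∈ (Set.range P)ᶜ, 0 < den Q := fun Q hQ =>
    Finset.sum_pos (fun k _ => hnumpos Q hQ k) Finset.univ_nonempty
  -- limits of individual factors for nodes different from `P i`
  have hnorm : ∀ n : Fin N, Tendsto (fun Q : EuclideanSpace ℝ (Fin s) => ‖Q - P n‖)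
      F (𝓝 ‖P i - P n‖) :=
    fun n => ((continuous_id.sub continuous_const).norm.tendsto (P i)).mono_left
      nhdsWithin_le_nhds
  have hfac : ∀ n : Fin N, n ≠ i →
      Tendsto (fun Q : EuclideanSpace ℝ (Fin s) => ‖Q - P n‖ ^ (-μ)) F
        (𝓝 (‖P i - P n‖ ^ (-μ))) := by
    intro n hn
    have hpos : 0 < ‖P i - P n‖ := by
      rw [norm_sub_pos_iff]
      exact fun h => hn (hPinj h).symm
    exact (Real.continuousAt_rpow_const _ (-μ) (Or.inl hpos.ne')).tendsto.comp (hnorm n)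
  have hnumlim : ∀ k, (∀ l, idx k l ≠ i) →
      Tendsto (num k) F (𝓝 (∏ l, ‖P i - P (idx k l)‖ ^ (-μ))) := by
    intro k hk
    exact tendsto_finset_prod _ fun l _ => hfac _ (hk l)
  -- the denominator blows up
  obtain ⟨j0, l0, hjl0⟩ := hcover i
  have hrest : Tendsto
      (fun Q : EuclideanSpace ℝ (Fin s) =>
        ∏ l ∈ Finset.univ.erase l0, ‖Q - P (idx j0 l)‖ ^ (-μ)) F
      (𝓝 (∏ l ∈ Finset.univ.erase l0, ‖P i - P (idx j0 l)‖ ^ (-μ))) := by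
    refine tendsto_finset_prod _ fun l hl => hfac _ ?_
    intro h
    exact (Finset.mem_erase.mp hl).1 (hidxinj j0 (h.trans hjl0.symm))
  have hrestpos : 0 < ∏ l ∈ Finset.univ.erase l0, ‖P i - P (idx j0 l)‖ ^ (-μ) := by
    refine Finset.prod_pos fun l hl => Real.rpow_pos_of_pos ?_ _
    rw [norm_sub_pos_iff]
    intro h
    exact (Finset.mem_erase.mp hl).1 (hidxinj j0 ((hPinj h.symm).trans hjl0.symm))
  have hblow : Tendsto (fun Q : EuclideanSpace ℝ (Fin s) => ‖Q - P i‖ ^ (-μ)) F atTop := by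
    have h0 : Tendsto (fun Q : EuclideanSpace ℝ (Fin s) => ‖Q - P i‖) F (𝓝[>] 0) := by
      refine (tendsto_norm_sub_self_nhdsNE (P i)).mono_left
        (nhdsWithin_mono _ ?_)
      intro Q hQ h
      exact hQ ⟨i, h.symm⟩
    have hr : Tendsto (fun x : ℝ => x ^ (-μ)) (𝓝[>] (0:ℝ)) atTop := by
      have h1 : Tendsto (fun x : ℝ => x ^ μ) (𝓝[>] (0:ℝ)) (𝓝[>] (0:ℝ)) := by
        apply tendsto_nhdsWithin_of_tendsto_nhds_of_eventually_within
        · have := (Real.continuousAt_rpow_const 0 μ (Or.inr hμ.le)).tendsto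
          simpa [Real.zero_rpow hμ.ne'] using this.mono_left nhdsWithin_le_nhds
        · filter_upwards [self_mem_nhdsWithin] with x hx
          exact Real.rpow_pos_of_pos hx μ
      refine h1.inv_tendsto_nhdsGT_zero.congr' ?_
      filter_upwards [self_mem_nhdsWithin] with x hx
      simp [Real.rpow_neg (le_of_lt hx)]
    exact hr.comp h0
  have hnum0 : Tendsto (num j0) F atTop := by
    have hmul := hblow.atTop_mul_pos hrestpos hrest
    refine hmul.congr fun Q => ?_
    simp only [hnumdef]
    rw [← hjl0]
    exact Finset.mul_prod_erase Finset.univ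
      (fun l => ‖Q - P (idx j0 l)‖ ^ (-μ)) (Finset.mem_univ l0)
  have hdenTop : Tendsto den F atTop := by
    refine tendsto_atTop_mono' F ?_ hnum0
    filter_upwards [hmem] with Q hQ
    exact Finset.single_le_sum (fun k _ => (hnumpos Q hQ k).le) (Finset.mem_univ j0)
  -- polynomial evaluations converge
  have hpoly : ∀ j, Tendsto
      (fun Q : EuclideanSpace ℝ (Fin s) => MvPolynomial.eval (Q : Fin s → ℝ) (π j)) F
      (𝓝 (MvPolynomial.eval ((P i : Fin s → ℝ)) (π j))) := by
    intro j
    have hc : Continuous fun Q : EuclideanSpace ℝ (Fin s) =>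
        MvPolynomial.eval (Q : Fin s → ℝ) (π j) :=
      (MvPolynomial.continuous_eval (π j)).comp (PiLp.continuous_ofLp 2 fun _ : Fin s => ℝ)
    exact (hc.tendsto (P i)).mono_left nhdsWithin_le_nhds
  -- each summand of the error tends to 0
  have hterm : ∀ j, Tendsto
      (fun Q : EuclideanSpace ℝ (Fin s) =>
        num j Q / den Q * (MvPolynomial.eval (Q : Fin s → ℝ) (π j) - fdata i)) F (𝓝 0) := by
    intro j
    by_cases hij : ∃ l, idx j l = i
    · obtain ⟨l, hl⟩ := hij
      have hev : MvPolynomial.eval ((P i : Fin s → ℝ)) (π j) = fdata i := by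
        rw [← hl]; exact hπ j l
      have h1 : Tendsto
          (fun Q : EuclideanSpace ℝ (Fin s) =>
            MvPolynomial.eval (Q : Fin s → ℝ) (π j) - fdata i) F (𝓝 0) := by
        simpa [hev] using (hpoly j).sub_const (fdata i)
      refine squeeze_zero_norm' ?_ (by simpa using h1.abs)
      filter_upwards [hmem] with Q hQ
      have hWnn : 0 ≤ num j Q / den Q :=
        div_nonneg (hnumpos Q hQ j).le (hdenpos Q hQ).le
      have hWle : num j Q / den Q ≤ 1 := by
        rw [div_le_one (hdenpos Q hQ)]
        exact Finset.single_le_sum (fun k _ => (hnumpos Q hQ k).le) (Finset.mem_univ j)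
      rw [Real.norm_eq_abs, abs_mul, abs_of_nonneg hWnn]
      exact mul_le_of_le_one_left (abs_nonneg _) hWle
    · push_neg at hij
      have h2 := (hnumlim j hij).div_atTop hdenTop
      have h3 := h2.mul ((hpoly j).sub_const (fdata i))
      simpa using h3
  have hsum : Tendsto
      (fun Q : EuclideanSpace ℝ (Fin s) =>
        ∑ j, num j Q / den Q * (MvPolynomial.eval (Q : Fin s → ℝ) (π j) - fdata i)) F
      (𝓝 0) := by
    have := tendsto_finset_sum Finset.univ fun j (_ : j ∈ Finset.univ) => hterm j
    simpa using this
  have key : Tendsto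
      (fun Q : EuclideanSpace ℝ (Fin s) =>
        fdata i + ∑ j, num j Q / den Q *
          (MvPolynomial.eval (Q : Fin s → ℝ) (π j) - fdata i)) F (𝓝 (fdata i)) := by
    simpa using (tendsto_const_nhds (x := fdata i) (f := F)).add hsum
  refine key.congr' ?_
  filter_upwards [hmem] with Q hQ
  have hW1 : ∑ j, num j Q / den Q = 1 := by
    rw [← Finset.sum_div]
    exact div_self (hdenpos Q hQ).ne'
  have hsplit : ∑ j, num j Q / den Q *
      (MvPolynomial.eval (Q : Fin s → ℝ) (π j) - fdata i)
      = (∑ j, num j Q / den Q * MvPolynomial.eval (Q : Fin s → ℝ) (π j))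
        - (∑ j, num j Q / den Q) * fdata i := by
    rw [Finset.sum_mul, ← Finset.sum_sub_distrib]
    exact Finset.sum_congr rfl fun j _ => by ring
  rw [hsplit, hW1]
  ring
end
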